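/- arXiv:1212.3134 — 2 statements merged into one kernel-verified Lean document; each statement's English description precedes it below -/
import Mathlib

section
/- Let B, C ∈ M_N(ℂ) with w(B) ≤ 1 and w(C) ≤ 1. Suppose u, v are unit vectors with |u*Bu| = 1 and |v*Cv| = 1, and suppose Cu = 0 and u*C = 0. Then u*v = 0. -/
open Matrix Kronecker

noncomputable def numRange {n : Type*} [Fintype n] (A : Matrix n n ℂ) : Set ℂ :=
  {z | ∃ u : n → ℂ, dotProduct (star u) u = 1 ∧ z = dotProduct (star u) (A.mulVec u)}

noncomputable def numRadius {n : Type*} [Fintype n] (A : Matrix n n ℂ) : ℝ :=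
  sSup {r | ∃ z ∈ numRange A, r = ‖z‖}

/-!
Write `v = z + α • u` with `α = u* v` and `z ⟂ u`. Since `u` lies in the kernels of both `C` and
`C*`, the `u`-component does not contribute to `v* C v`, so `v* C v = z* C z`. Homogeneity of the
numerical radius then gives `1 = |z* C z| ≤ w(C) ‖z‖² ≤ ‖z‖² = 1 - |α|²`, forcing `α = 0`.
-/

section

variable {n : Type*} [Fintype n]

lemma star_dotProduct_self_eq_norm_sq (x : n → ℂ) :
    star x ⬝ᵥ x = (‖WithLp.toLp 2 x‖ : ℂ) ^ 2 := by
  have h := inner_self_eq_norm_sq_to_K (𝕜 := ℂ) (WithLp.toLp 2 x)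
  rw [EuclideanSpace.inner_toLp_toLp, dotProduct_comm] at h
  exact_mod_cast h

lemma norm_star_dotProduct_mulVec_le_opNorm [DecidableEq n] (A : Matrix n n ℂ) (x : n → ℂ) :
    ‖star x ⬝ᵥ A *ᵥ x‖ ≤ ‖toEuclideanCLM (𝕜 := ℂ) A‖ * ‖WithLp.toLp 2 x‖ ^ 2 :=
  calc ‖star x ⬝ᵥ A *ᵥ x‖
      = ‖inner ℂ (WithLp.toLp 2 x) (toEuclideanCLM (𝕜 := ℂ) A (WithLp.toLp 2 x))‖ := by
        rw [toEuclideanCLM_toLp, EuclideanSpace.inner_toLp_toLp, dotProduct_comm]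
    _ ≤ ‖WithLp.toLp 2 x‖ * ‖toEuclideanCLM (𝕜 := ℂ) A (WithLp.toLp 2 x)‖ :=
        norm_inner_le_norm _ _
    _ ≤ ‖WithLp.toLp 2 x‖ * (‖toEuclideanCLM (𝕜 := ℂ) A‖ * ‖WithLp.toLp 2 x‖) := by
        gcongr; exact ContinuousLinearMap.le_opNorm _ _
    _ = _ := by ring

lemma bddAbove_norm_numRange (A : Matrix n n ℂ) : BddAbove {r | ∃ z ∈ numRange A, r = ‖z‖} := by
  classical
  refine ⟨‖toEuclideanCLM (𝕜 := ℂ) A‖, ?_⟩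
  rintro _ ⟨_, ⟨x, hx, rfl⟩, rfl⟩
  have hx1 : ‖WithLp.toLp 2 x‖ = 1 := by
    rw [star_dotProduct_self_eq_norm_sq] at hx
    exact (pow_eq_one_iff_of_nonneg (norm_nonneg _) two_ne_zero).mp (by exact_mod_cast hx)
  simpa [hx1] using norm_star_dotProduct_mulVec_le_opNorm A x

lemma norm_star_dotProduct_mulVec_le_numRadius (A : Matrix n n ℂ) {x : n → ℂ}
    (hx : star x ⬝ᵥ x = 1) : ‖star x ⬝ᵥ A *ᵥ x‖ ≤ numRadius A :=
  le_csSup (bddAbove_norm_numRange A) ⟨_, ⟨x, hx, rfl⟩, rfl⟩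

lemma norm_star_dotProduct_mulVec_le_numRadius_mul (A : Matrix n n ℂ) (x : n → ℂ) :
    ‖star x ⬝ᵥ A *ᵥ x‖ ≤ numRadius A * ‖WithLp.toLp 2 x‖ ^ 2 := by
  rcases eq_or_ne x 0 with rfl | hx
  · simp
  set r := ‖WithLp.toLp 2 x‖ with hr_def
  have hr : 0 < r := norm_pos_iff.mpr (by simpa using hx)
  have hscale : ∀ w : n → ℂ, star (r⁻¹ • x) ⬝ᵥ (r⁻¹ • w) = (r ^ 2)⁻¹ • (star x ⬝ᵥ w) := by
    intro w
    rw [star_smul, star_trivial, smul_dotProduct, dotProduct_smul, smul_smul, ← mul_inv, sq]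
  have hy : star (r⁻¹ • x) ⬝ᵥ (r⁻¹ • x) = 1 := by
    rw [hscale, star_dotProduct_self_eq_norm_sq, ← hr_def, Complex.real_smul]
    push_cast
    exact inv_mul_cancel₀ (pow_ne_zero 2 (by exact_mod_cast hr.ne'))
  have := norm_star_dotProduct_mulVec_le_numRadius A hy
  rw [mulVec_smul, hscale, norm_smul, Real.norm_of_nonneg (by positivity)] at this
  rwa [inv_mul_le_iff₀ (by positivity), mul_comm] at this

lemma star_dotProduct_mulVec_add_smul {C : Matrix n n ℂ} {u : n → ℂ} (hCu : C *ᵥ u = 0)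
    (huC : star u ᵥ* C = 0) (v : n → ℂ) (c : ℂ) :
    star (v + c • u) ⬝ᵥ C *ᵥ (v + c • u) = star v ⬝ᵥ C *ᵥ v := by
  rw [mulVec_add, mulVec_smul, hCu, smul_zero, add_zero, star_add, add_dotProduct, star_smul,
    smul_dotProduct, dotProduct_mulVec (star u), huC, zero_dotProduct, smul_zero, add_zero]

lemma star_dotProduct_add_smul_self {u z : n → ℂ} (h : star u ⬝ᵥ z = 0) (c : ℂ) :
    star (z + c • u) ⬝ᵥ (z + c • u) = star z ⬝ᵥ z + star c * c * (star u ⬝ᵥ u) := by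
  have h' : star z ⬝ᵥ u = 0 := by rw [star_dotProduct, h, star_zero]
  simp only [star_add, star_smul, add_dotProduct, dotProduct_add, smul_dotProduct,
    dotProduct_smul, h, h', smul_eq_mul]
  ring

end

theorem claim2_orthogonality_general (N : ℕ) (C : Matrix (Fin N) (Fin N) ℂ)
    (hC : numRadius C ≤ 1)
    (u v : Fin N → ℂ)
    (hu : dotProduct (star u) u = 1) (hv : dotProduct (star v) v = 1)
    (hCv : ‖dotProduct (star v) (C.mulVec v)‖ = 1)
    (hCu : C.mulVec u = 0) (huC : Matrix.vecMul (star u) C = 0) :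
    dotProduct (star u) v = 0 := by
  set α := star u ⬝ᵥ v
  set z := v - α • u
  have hvz : v = z + α • u := (sub_add_cancel v _).symm
  have huz : star u ⬝ᵥ z = 0 := by simp [z, dotProduct_sub, dotProduct_smul, hu, α]
  have hpyth : ‖WithLp.toLp 2 z‖ ^ 2 + Complex.normSq α = 1 := by
    have h := star_dotProduct_add_smul_self huz α
    rw [← hvz, hv, hu, star_dotProduct_self_eq_norm_sq, mul_one, Complex.star_def,
      ← Complex.normSq_eq_conj_mul_self] at h
    exact_mod_cast h.symm
  have hz : 1 ≤ ‖WithLp.toLp 2 z‖ ^ 2 :=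
    calc 1 = ‖star v ⬝ᵥ C *ᵥ v‖ := hCv.symm
      _ = ‖star z ⬝ᵥ C *ᵥ z‖ := by rw [hvz, star_dotProduct_mulVec_add_smul hCu huC]
      _ ≤ numRadius C * ‖WithLp.toLp 2 z‖ ^ 2 :=
        norm_star_dotProduct_mulVec_le_numRadius_mul C z
      _ ≤ ‖WithLp.toLp 2 z‖ ^ 2 := mul_le_of_le_one_left (by positivity) hC
  exact Complex.normSq_eq_zero.mp (by linarith [Complex.normSq_nonneg α])

theorem claim2_orthogonality (N : ℕ) (B C : Matrix (Fin N) (Fin N) ℂ)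
    (hB : numRadius B ≤ 1) (hC : numRadius C ≤ 1)
    (u v : Fin N → ℂ)
    (hu : dotProduct (star u) u = 1) (hv : dotProduct (star v) v = 1)
    (hBu : ‖dotProduct (star u) (B.mulVec u)‖ = 1)
    (hCv : ‖dotProduct (star v) (C.mulVec v)‖ = 1)
    (hCu : C.mulVec u = 0) (huC : Matrix.vecMul (star u) C = 0) :
    dotProduct (star u) v = 0 :=
  claim2_orthogonality_general N C hC u v hu hv hCv hCu huC
end

section
/- Let φ: M_{mn}(ℂ) → M_{mn}(ℂ) be linear with w(φ(A ⊗ B)) = w(A ⊗ B) for all A ∈ M_m, B ∈ M_n. Then there exist an orthonormal basis {u_{ij} : 1 ≤ i ≤ m, 1 ≤ j ≤ n} of ℂ^{mn} and complex units ξ_{ij} such that φ(E_{ii} ⊗ E_{jj}) = ξ_{ij} u_{ij} u_{ij}* for all i, j; equivalently, there is a unitary U with U*φ(E_{ii} ⊗ E_{jj})U = ξ_{ij} E_{ii} ⊗ E_{jj}. -/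
/-!
Write `F i j = φ (E_ii ⊗ E_jj)`. The hypothesis bounds the numerical radius of
`φ (diagonal α ⊗ diagonal β)` by `1` whenever all `‖α i‖, ‖β j‖ ≤ 1`, and gives `w (F i j) = 1`.
Take a unit vector `x` with `‖⟨x, F i j x⟩‖ = 1` and let `ξ = ⟨x, F i j x⟩`, so that
`X = ξ̄ • F i j` satisfies `⟨x, X x⟩ = 1`. As `w X ≤ 1`, the matrix `2 - (X + Xᴴ)` is positive
semidefinite and vanishes at `x`, whence `(X + Xᴴ) x = 2 x`. Running this for `X + c • Y` over the
unit disc shows that `Y x = Yᴴ x = 0` whenever all these perturbations keep `w ≤ 1`; taking `α, β`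
supported on two indices, every other `F k l` annihilates `x` from both sides. Hence the vectors `x`
are orthonormal, and `X` agrees with `x xᴴ` on this basis.
-/

open Matrix Kronecker

open ComplexOrder

section NumericalRadius

variable {n : Type*} [Fintype n]

lemma star_dotProduct_self_eq_sum (u : n → ℂ) : star u ⬝ᵥ u = ((∑ i, ‖u i‖ ^ 2 : ℝ) : ℂ) := by
  simp [dotProduct, Complex.conj_mul']

lemma isCompact_setOf_star_dotProduct_self_eq_one :
    IsCompact {u : n → ℂ | star u ⬝ᵥ u = 1} := by
  refine Metric.isCompact_of_isClosed_isBounded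
    (isClosed_eq (by fun_prop) continuous_const) ?_
  refine (Metric.isBounded_iff_subset_closedBall 0).2 ⟨1, fun u hu => ?_⟩
  rw [Set.mem_ofPred_eq, star_dotProduct_self_eq_sum, Complex.ofReal_eq_one] at hu
  rw [mem_closedBall_zero_iff, pi_norm_le_iff_of_nonneg zero_le_one]
  intro i
  have : ‖u i‖ ^ 2 ≤ 1 := hu ▸ Finset.single_le_sum (fun j _ => sq_nonneg ‖u j‖) (Finset.mem_univ i)
  exact (sq_le_one_iff₀ (norm_nonneg _)).1 this

lemma numRange_eq_image (A : Matrix n n ℂ) :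
    numRange A = (fun u => star u ⬝ᵥ A *ᵥ u) '' {u | star u ⬝ᵥ u = 1} := by
  ext z
  simp [numRange, eq_comm]

lemma isCompact_numRange (A : Matrix n n ℂ) : IsCompact (numRange A) := by
  rw [numRange_eq_image]
  exact isCompact_setOf_star_dotProduct_self_eq_one.image (by fun_prop)

lemma numRadius_eq_sSup_image (A : Matrix n n ℂ) : numRadius A = sSup (norm '' numRange A) := by
  simp only [numRadius, Set.image, eq_comm]

lemma norm_le_numRadius (A : Matrix n n ℂ) {u : n → ℂ} (hu : star u ⬝ᵥ u = 1) :
    ‖star u ⬝ᵥ A *ᵥ u‖ ≤ numRadius A := by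
  rw [numRadius_eq_sSup_image]
  exact le_csSup ((isCompact_numRange A).image continuous_norm).bddAbove ⟨_, ⟨u, hu, rfl⟩, rfl⟩

lemma numRadius_le {A : Matrix n n ℂ} {c : ℝ} (hc : 0 ≤ c)
    (h : ∀ u : n → ℂ, star u ⬝ᵥ u = 1 → ‖star u ⬝ᵥ A *ᵥ u‖ ≤ c) : numRadius A ≤ c := by
  refine Real.sSup_le ?_ hc
  rintro r ⟨z, ⟨u, hu, rfl⟩, rfl⟩
  exact h u hu

lemma exists_norm_eq_numRadius [Nonempty n] (A : Matrix n n ℂ) :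
    ∃ u : n → ℂ, star u ⬝ᵥ u = 1 ∧ ‖star u ⬝ᵥ A *ᵥ u‖ = numRadius A := by
  classical
  have hne : (norm '' numRange A).Nonempty := by
    refine ⟨_, _, ⟨Pi.single (Classical.arbitrary n) 1, ?_, rfl⟩, rfl⟩
    simp
  obtain ⟨_, ⟨u, hu, rfl⟩, hmax⟩ := ((isCompact_numRange A).image continuous_norm).sSup_mem hne
  exact ⟨u, hu, (numRadius_eq_sSup_image A).trans hmax.symm |>.symm⟩

lemma star_dotProduct_conjTranspose_mulVec (M : Matrix n n ℂ) (u v : n → ℂ) :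
    star u ⬝ᵥ Mᴴ *ᵥ v = star (star v ⬝ᵥ M *ᵥ u) := by
  rw [dotProduct_mulVec, ← star_mulVec, star_dotProduct]

lemma star_dotProduct_mulVec_eq_zero {M : Matrix n n ℂ} {u : n → ℂ} (h : Mᴴ *ᵥ u = 0)
    (v : n → ℂ) : star u ⬝ᵥ M *ᵥ v = 0 := by
  rw [← conjTranspose_conjTranspose M, star_dotProduct_conjTranspose_mulVec, h, dotProduct_zero,
    star_zero]

lemma norm_le_numRadius_mul (A : Matrix n n ℂ) (u : n → ℂ) :
    ‖star u ⬝ᵥ A *ᵥ u‖ ≤ numRadius A * ∑ i, ‖u i‖ ^ 2 := by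
  set s := ∑ i, ‖u i‖ ^ 2
  have hu : star u ⬝ᵥ u = (s : ℂ) := star_dotProduct_self_eq_sum u
  have hs0 : 0 ≤ s := Finset.sum_nonneg fun i _ => sq_nonneg ‖u i‖
  obtain hs | hs := hs0.eq_or_lt
  · rw [← hs, Complex.ofReal_zero, dotProduct_star_self_eq_zero] at hu
    simp [hu, ← hs]
  set c : ℂ := (((√s)⁻¹ : ℝ) : ℂ)
  have hcc : star c * c = ((s⁻¹ : ℝ) : ℂ) := by
    rw [Complex.star_def, Complex.conj_ofReal, ← Complex.ofReal_mul, ← mul_inv,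
      Real.mul_self_sqrt hs.le]
  have hunit : star (c • u) ⬝ᵥ c • u = 1 := by
    rw [star_smul, smul_dotProduct, dotProduct_smul, smul_eq_mul, smul_eq_mul, ← mul_assoc, hcc,
      hu, ← Complex.ofReal_mul, inv_mul_cancel₀ hs.ne', Complex.ofReal_one]
  have hq : star (c • u) ⬝ᵥ A *ᵥ (c • u) = ((s⁻¹ : ℝ) : ℂ) * (star u ⬝ᵥ A *ᵥ u) := by
    rw [star_smul, mulVec_smul, smul_dotProduct, dotProduct_smul, smul_eq_mul, smul_eq_mul,
      ← mul_assoc, hcc]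
  have := norm_le_numRadius A hunit
  rw [hq, norm_mul, Complex.norm_real, Real.norm_of_nonneg (inv_nonneg.2 hs.le),
    inv_mul_le_iff₀ hs] at this
  linarith

variable [DecidableEq n]

lemma numRadius_diagonal_le_one {d : n → ℂ} (hd : ∀ i, ‖d i‖ ≤ 1) :
    numRadius (diagonal d) ≤ 1 := by
  refine numRadius_le zero_le_one fun u hu => ?_
  rw [star_dotProduct_self_eq_sum, Complex.ofReal_eq_one] at hu
  calc ‖star u ⬝ᵥ diagonal d *ᵥ u‖ = ‖∑ i, d i * ((‖u i‖ ^ 2 : ℝ) : ℂ)‖ := by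
        simp only [dotProduct, mulVec_diagonal, Pi.star_apply, Complex.ofReal_pow]
        congr 1
        refine Finset.sum_congr rfl fun i _ => ?_
        rw [← Complex.conj_mul', Complex.star_def]
        ring
    _ ≤ ∑ i, ‖u i‖ ^ 2 := by
        refine (norm_sum_le _ _).trans (Finset.sum_le_sum fun i _ => ?_)
        rw [norm_mul, Complex.norm_real, Real.norm_of_nonneg (sq_nonneg _)]
        exact mul_le_of_le_one_left (sq_nonneg _) (hd i)
    _ = 1 := hu

lemma norm_le_numRadius_diagonal (d : n → ℂ) (i : n) :
    ‖d i‖ ≤ numRadius (diagonal d) := by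
  simpa using norm_le_numRadius (diagonal d) (u := Pi.single i 1) (by simp)

lemma posSemidef_two_sub_add_conjTranspose {M : Matrix n n ℂ}
    (hM : numRadius M ≤ 1) : (2 - (M + Mᴴ)).PosSemidef := by
  refine .of_dotProduct_mulVec_nonneg ?_ fun u => ?_
  · simp [IsHermitian, conjTranspose_sub, add_comm]
  have hre : (star u ⬝ᵥ M *ᵥ u).re ≤ ∑ i, ‖u i‖ ^ 2 :=
    (Complex.re_le_norm _).trans <| (norm_le_numRadius_mul M u).trans <|
      mul_le_of_le_one_left (Finset.sum_nonneg fun i _ => sq_nonneg _) hM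
  rw [sub_mulVec, add_mulVec, dotProduct_sub, dotProduct_add,
    star_dotProduct_conjTranspose_mulVec, ofNat_mulVec, dotProduct_smul,
    star_dotProduct_self_eq_sum, Complex.nonneg_iff]
  generalize ∑ i, ‖u i‖ ^ 2 = s at hre ⊢
  constructor <;> simp
  linarith

lemma add_conjTranspose_mulVec_eq_two_smul {M : Matrix n n ℂ} {x : n → ℂ}
    (hM : numRadius M ≤ 1) (hx : star x ⬝ᵥ x = 1) (hMx : star x ⬝ᵥ M *ᵥ x = 1) :
    (M + Mᴴ) *ᵥ x = (2 : ℂ) • x := by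
  have h0 : star x ⬝ᵥ (2 - (M + Mᴴ)) *ᵥ x = 0 := by
    rw [sub_mulVec, add_mulVec, dotProduct_sub, dotProduct_add,
      star_dotProduct_conjTranspose_mulVec, hMx]
    simp [hx, one_add_one_eq_two]
  have := ((posSemidef_two_sub_add_conjTranspose hM).dotProduct_mulVec_zero_iff x).1 h0
  rwa [sub_mulVec, sub_eq_zero, ofNat_mulVec, eq_comm] at this

lemma mulVec_eq_zero_of_numRadius_add_smul_le_one {X Y : Matrix n n ℂ} {x : n → ℂ}
    (hx : star x ⬝ᵥ x = 1) (hXx : star x ⬝ᵥ X *ᵥ x = 1)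
    (h : ∀ c : ℂ, ‖c‖ ≤ 1 → numRadius (X + c • Y) ≤ 1) : Y *ᵥ x = 0 ∧ Yᴴ *ᵥ x = 0 := by
  have hq (c : ℂ) : star x ⬝ᵥ (X + c • Y) *ᵥ x = 1 + c * (star x ⬝ᵥ Y *ᵥ x) := by
    rw [add_mulVec, smul_mulVec, dotProduct_add, dotProduct_smul, hXx, smul_eq_mul]
  have hz : star x ⬝ᵥ Y *ᵥ x = 0 := by
    have hre (c : ℂ) (hc : ‖c‖ ≤ 1) : (c * (star x ⬝ᵥ Y *ᵥ x)).re ≤ 0 := by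
      have := (Complex.re_le_norm _).trans ((norm_le_numRadius _ hx).trans (h c hc))
      rw [hq] at this
      simpa using this
    have h1 := hre 1 (by simp)
    have h2 := hre (-1) (by simp)
    have h3 := hre Complex.I (by simp)
    have h4 := hre (-Complex.I) (by simp)
    apply Complex.ext <;> simp at h1 h2 h3 h4 ⊢ <;> linarith
  have heig (c : ℂ) (hc : ‖c‖ ≤ 1) :
      (X + Xᴴ) *ᵥ x + (c • Y *ᵥ x + star c • Yᴴ *ᵥ x) = (2 : ℂ) • x := by
    rw [← add_conjTranspose_mulVec_eq_two_smul (h c hc) hx (by rw [hq, hz, mul_zero, add_zero])]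
    simp only [conjTranspose_add, conjTranspose_smul, add_mulVec, smul_mulVec]
    abel
  have h0 := heig 0 (by simp)
  have h1 := heig 1 (by simp)
  have hI := heig Complex.I (by simp)
  simp only [zero_smul, star_zero, add_zero, one_smul, star_one] at h0 h1 hI
  rw [h0, add_eq_left] at h1 hI
  have hsub : Y *ᵥ x - Yᴴ *ᵥ x = 0 := by
    have : Complex.I • (Y *ᵥ x - Yᴴ *ᵥ x) = 0 := by
      rw [← hI, Complex.star_def, Complex.conj_I, smul_sub, neg_smul, sub_eq_add_neg]
    exact (smul_eq_zero.1 this).resolve_left Complex.I_ne_zero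
  constructor
  · linear_combination (norm := module) (1 / 2 : ℂ) • h1 + (1 / 2 : ℂ) • hsub
  · linear_combination (norm := module) (1 / 2 : ℂ) • h1 - (1 / 2 : ℂ) • hsub

lemma eq_of_forall_star_dotProduct_mulVec_eq {u : n → n → ℂ}
    (hu : ∀ p q, star (u p) ⬝ᵥ u q = if p = q then 1 else 0) {A B : Matrix n n ℂ}
    (h : ∀ p q, star (u p) ⬝ᵥ A *ᵥ u q = star (u p) ⬝ᵥ B *ᵥ u q) : A = B := by
  set U : Matrix n n ℂ := of fun a q => u q a
  have hsandwich (M : Matrix n n ℂ) (p q : n) : (Uᴴ * M * U) p q = star (u p) ⬝ᵥ M *ᵥ u q := by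
    simp only [U, mul_apply, conjTranspose_apply, of_apply, dotProduct, mulVec, Pi.star_apply,
      Finset.sum_mul, Finset.mul_sum, mul_assoc]
    exact Finset.sum_comm
  have hU : U * Uᴴ = 1 := mul_eq_one_comm.1 <| by
    ext p q
    simpa [U, mul_apply, dotProduct, one_apply] using hu p q
  have hconj (M : Matrix n n ℂ) : U * (Uᴴ * M * U) * Uᴴ = M := by
    rw [← Matrix.mul_assoc, ← Matrix.mul_assoc, hU, Matrix.one_mul, Matrix.mul_assoc, hU,
      Matrix.mul_one]
  rw [← hconj A, ← hconj B]
  congr 2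
  ext p q
  rw [hsandwich, hsandwich, h]

section Family

variable {X : n → Matrix n n ℂ} {x : n → n → ℂ}

lemma star_dotProduct_eq_ite_of_mulVec_eq_zero (hX : ∀ p, numRadius (X p) ≤ 1)
    (hx : ∀ p, star (x p) ⬝ᵥ x p = 1) (hXx : ∀ p, star (x p) ⬝ᵥ X p *ᵥ x p = 1)
    (hkill : ∀ p q, q ≠ p → X q *ᵥ x p = 0 ∧ (X q)ᴴ *ᵥ x p = 0) (p q : n) :
    star (x p) ⬝ᵥ x q = if p = q then 1 else 0 := by
  split_ifs with hpq
  · exact hpq ▸ hx p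
  obtain ⟨h1, h2⟩ := hkill p q (Ne.symm hpq)
  have := congrArg (star (x p) ⬝ᵥ ·) (add_conjTranspose_mulVec_eq_two_smul (hX q) (hx q) (hXx q))
  simp only [add_mulVec, dotProduct_add, dotProduct_smul, star_dotProduct_mulVec_eq_zero h2,
    zero_add] at this
  rw [star_dotProduct_mulVec_eq_zero (by rwa [conjTranspose_conjTranspose])] at this
  exact (smul_eq_zero.1 this.symm).resolve_left two_ne_zero

lemma eq_vecMulVec_of_mulVec_eq_zero (hx : ∀ p q, star (x p) ⬝ᵥ x q = if p = q then 1 else 0)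
    (hXx : ∀ p, star (x p) ⬝ᵥ X p *ᵥ x p = 1)
    (hkill : ∀ p q, q ≠ p → X q *ᵥ x p = 0 ∧ (X q)ᴴ *ᵥ x p = 0) (p : n) :
    X p = vecMulVec (x p) (star (x p)) := by
  refine eq_of_forall_star_dotProduct_mulVec_eq hx fun q r => ?_
  rw [vecMulVec_mulVec, dotProduct_smul, hx, hx, op_smul_eq_mul]
  by_cases hrp : r = p
  · subst hrp
    by_cases hqr : q = r
    · subst hqr
      simpa using hXx q
    rw [star_dotProduct_mulVec_eq_zero (hkill q r (Ne.symm hqr)).2]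
    simp [hqr]
  · rw [(hkill r p (Ne.symm hrp)).1]
    simp [Ne.symm hrp]

end Family

end NumericalRadius

section Polydisc

variable {ι : Type*} [DecidableEq ι]

lemma norm_smul_single_apply_le_one (i : ι) {a : ℂ} (ha : ‖a‖ ≤ 1) (r : ι) :
    ‖(a • Pi.single i 1 : ι → ℂ) r‖ ≤ 1 := by
  rw [Pi.smul_apply, Pi.single_apply]
  split_ifs <;> simp [ha]

lemma norm_smul_single_add_smul_single_apply_le_one {i k : ι} (hik : i ≠ k) {a b : ℂ}
    (ha : ‖a‖ ≤ 1) (hb : ‖b‖ ≤ 1) (r : ι) :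
    ‖(a • Pi.single i 1 + b • Pi.single k 1 : ι → ℂ) r‖ ≤ 1 := by
  by_cases hri : r = i
  · subst hri
    simpa [Pi.single_apply, hik] using ha
  · simpa [Pi.single_apply, hri] using norm_smul_single_apply_le_one k hb r

end Polydisc

section Bilinear

variable {ι κ P : Type*} [DecidableEq ι] [DecidableEq κ] [Fintype P] [DecidableEq P]
  {T : (ι → ℂ) →ₗ[ℂ] (κ → ℂ) →ₗ[ℂ] Matrix P P ℂ}

lemma mulVec_eq_zero_of_ne_left
    (hT : ∀ α β, (∀ i, ‖α i‖ ≤ 1) → (∀ j, ‖β j‖ ≤ 1) → numRadius (T α β) ≤ 1)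
    {i k : ι} {j : κ} (hki : k ≠ i) {a : ℂ} (ha : ‖a‖ ≤ 1) {x : P → ℂ} (hx : star x ⬝ᵥ x = 1)
    (hXx : star x ⬝ᵥ (a • T (Pi.single i 1) (Pi.single j 1)) *ᵥ x = 1) :
    T (Pi.single k 1) (Pi.single j 1) *ᵥ x = 0 ∧
      (T (Pi.single k 1) (Pi.single j 1))ᴴ *ᵥ x = 0 := by
  refine mulVec_eq_zero_of_numRadius_add_smul_le_one hx hXx fun c hc => ?_
  have := hT (a • Pi.single i 1 + c • Pi.single k 1) (Pi.single j 1)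
    (norm_smul_single_add_smul_single_apply_le_one hki.symm ha hc)
    (by simpa using norm_smul_single_apply_le_one j (a := 1) (by simp))
  simpa using this

lemma mulVec_eq_zero_of_ne_right
    (hT : ∀ α β, (∀ i, ‖α i‖ ≤ 1) → (∀ j, ‖β j‖ ≤ 1) → numRadius (T α β) ≤ 1)
    {i : ι} {j l : κ} (hlj : l ≠ j) {a : ℂ} (ha : ‖a‖ = 1) {x : P → ℂ} (hx : star x ⬝ᵥ x = 1)
    (hXx : star x ⬝ᵥ (a • T (Pi.single i 1) (Pi.single j 1)) *ᵥ x = 1) :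
    T (Pi.single i 1) (Pi.single l 1) *ᵥ x = 0 ∧
      (T (Pi.single i 1) (Pi.single l 1))ᴴ *ᵥ x = 0 := by
  have ha0 : a ≠ 0 := by rintro rfl; simp at ha
  have := mulVec_eq_zero_of_numRadius_add_smul_le_one (Y := a • T (Pi.single i 1) (Pi.single l 1))
    hx hXx fun c hc => ?_
  · simpa [smul_mulVec, ha0] using this
  have := hT (a • Pi.single i 1) (Pi.single j 1 + c • Pi.single l 1)
    (norm_smul_single_apply_le_one i ha.le)
    (by simpa using norm_smul_single_add_smul_single_apply_le_one hlj.symm (a := 1) (by simp) hc)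
  simpa [smul_comm a c] using this

lemma mulVec_eq_zero_of_ne
    (hT : ∀ α β, (∀ i, ‖α i‖ ≤ 1) → (∀ j, ‖β j‖ ≤ 1) → numRadius (T α β) ≤ 1)
    {i : ι} {j : κ} {a : ℂ} (ha : ‖a‖ = 1) {x : P → ℂ} (hx : star x ⬝ᵥ x = 1)
    (hXx : star x ⬝ᵥ (a • T (Pi.single i 1) (Pi.single j 1)) *ᵥ x = 1)
    {k : ι} {l : κ} (hkl : (k, l) ≠ (i, j)) :
    T (Pi.single k 1) (Pi.single l 1) *ᵥ x = 0 ∧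
      (T (Pi.single k 1) (Pi.single l 1))ᴴ *ᵥ x = 0 := by
  by_cases hki : k = i
  · subst hki
    exact mulVec_eq_zero_of_ne_right hT (fun h => hkl (by rw [h])) ha hx hXx
  by_cases hlj : l = j
  · subst hlj
    exact mulVec_eq_zero_of_ne_left hT hki ha.le hx hXx
  obtain ⟨hkj, -⟩ := mulVec_eq_zero_of_ne_left hT hki ha.le hx hXx
  obtain ⟨hil, hil'⟩ := mulVec_eq_zero_of_ne_right hT hlj ha hx hXx
  -- Freezing the `k`-coefficient at `1` leaves a one-parameter perturbation in the `l`-direction;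
  -- its base still attains `1` at `x` because the `(k, j)` term kills `x`.
  have hX'x : star x ⬝ᵥ (a • T (Pi.single i 1) (Pi.single j 1) +
      T (Pi.single k 1) (Pi.single j 1)) *ᵥ x = 1 := by
    rw [add_mulVec, hkj, add_zero, hXx]
  have := mulVec_eq_zero_of_numRadius_add_smul_le_one
    (Y := a • T (Pi.single i 1) (Pi.single l 1) + T (Pi.single k 1) (Pi.single l 1))
    hx hX'x fun c hc => ?_
  · simpa [add_mulVec, smul_mulVec, hil, hil'] using this
  have := hT (a • Pi.single i 1 + (1 : ℂ) • Pi.single k 1) (Pi.single j 1 + c • Pi.single l 1)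
    (norm_smul_single_add_smul_single_apply_le_one (Ne.symm hki) ha.le (by simp))
    (by simpa using
      norm_smul_single_add_smul_single_apply_le_one (Ne.symm hlj) (a := 1) (by simp) hc)
  convert this using 2
  simp only [map_add, map_smul, LinearMap.add_apply, LinearMap.smul_apply, one_smul]

end Bilinear

theorem exists_orthonormal_eq_smul_vecMulVec {ι κ : Type*} [Fintype ι] [DecidableEq ι]
    [Fintype κ] [DecidableEq κ] (T : (ι → ℂ) →ₗ[ℂ] (κ → ℂ) →ₗ[ℂ] Matrix (ι × κ) (ι × κ) ℂ)
    (hT : ∀ α β, (∀ i, ‖α i‖ ≤ 1) → (∀ j, ‖β j‖ ≤ 1) → numRadius (T α β) ≤ 1)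
    (hT1 : ∀ i j, 1 ≤ numRadius (T (Pi.single i 1) (Pi.single j 1))) :
    ∃ (u : ι × κ → ι × κ → ℂ) (ξ : ι × κ → ℂ),
      (∀ p q, star (u p) ⬝ᵥ u q = if p = q then 1 else 0) ∧ (∀ p, ‖ξ p‖ = 1) ∧
      ∀ i j, T (Pi.single i 1) (Pi.single j 1) =
        ξ (i, j) • vecMulVec (u (i, j)) (star (u (i, j))) := by
  set F : ι × κ → Matrix (ι × κ) (ι × κ) ℂ := fun p => T (Pi.single p.1 1) (Pi.single p.2 1)
  have hF (p : ι × κ) : numRadius (F p) = 1 := by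
    refine le_antisymm (hT _ _ ?_ ?_) (hT1 p.1 p.2) <;>
      simpa using norm_smul_single_apply_le_one _ (a := 1) (by simp)
  choose x hx hxF using fun p => haveI : Nonempty (ι × κ) := ⟨p⟩; exists_norm_eq_numRadius (F p)
  set ξ : ι × κ → ℂ := fun p => star (x p) ⬝ᵥ F p *ᵥ x p
  have hξ (p : ι × κ) : ‖ξ p‖ = 1 := (hxF p).trans (hF p)
  have hXx (p : ι × κ) : star (x p) ⬝ᵥ (star (ξ p) • F p) *ᵥ x p = 1 := by
    rw [smul_mulVec, dotProduct_smul, smul_eq_mul, Complex.star_def, Complex.conj_mul', hξ]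
    simp
  have hX (p : ι × κ) : numRadius (star (ξ p) • F p) ≤ 1 := by
    simpa using hT (star (ξ p) • Pi.single p.1 1) (Pi.single p.2 1)
      (norm_smul_single_apply_le_one _ (by rw [norm_star, hξ]))
      (by simpa using norm_smul_single_apply_le_one _ (a := 1) (by simp))
  have hkill (p q : ι × κ) (hqp : q ≠ p) :
      (star (ξ q) • F q) *ᵥ x p = 0 ∧ (star (ξ q) • F q)ᴴ *ᵥ x p = 0 := by
    obtain ⟨h1, h2⟩ := mulVec_eq_zero_of_ne hT (by rw [norm_star, hξ]) (hx p) (hXx p) hqp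
    exact ⟨by rw [smul_mulVec, h1, smul_zero],
      by rw [conjTranspose_smul, smul_mulVec, h2, smul_zero]⟩
  have horth := star_dotProduct_eq_ite_of_mulVec_eq_zero hX hx hXx hkill
  refine ⟨x, ξ, horth, hξ, fun i j => ?_⟩
  rw [← eq_vecMulVec_of_mulVec_eq_zero horth hXx hkill, smul_smul, Complex.star_def,
    Complex.mul_conj', hξ]
  simp [F]

theorem preserver_diagonal_structure (m n : ℕ)
    (φ : Matrix (Fin m × Fin n) (Fin m × Fin n) ℂ →ₗ[ℂ] Matrix (Fin m × Fin n) (Fin m × Fin n) ℂ)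
    (hφ : ∀ (A : Matrix (Fin m) (Fin m) ℂ) (B : Matrix (Fin n) (Fin n) ℂ),
      numRadius (φ (A ⊗ₖ B)) = numRadius (A ⊗ₖ B)) :
    ∃ (u : Fin m × Fin n → Fin m × Fin n → ℂ) (ξ : Fin m × Fin n → ℂ),
      (∀ p q : Fin m × Fin n,
        dotProduct (star (u p)) (u q) = if p = q then 1 else 0) ∧
      (∀ p, ‖ξ p‖ = 1) ∧
      (∀ (i : Fin m) (j : Fin n),
        φ (Matrix.single i i 1 ⊗ₖ Matrix.single j j 1) =
          ξ (i, j) • Matrix.vecMulVec (u (i, j)) (star (u (i, j)))) := by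
  set T := ((kroneckerBilinear (R := ℂ) (α := ℂ)).compl₁₂ (diagonalLinearMap (Fin m) ℂ ℂ)
    (diagonalLinearMap (Fin n) ℂ ℂ)).compr₂ φ
  have hT (α β) : T α β = φ (diagonal α ⊗ₖ diagonal β) := rfl
  obtain ⟨u, ξ, hu, hξ, hTsingle⟩ := exists_orthonormal_eq_smul_vecMulVec T
    (fun α β hα hβ => by
      rw [hT, hφ, diagonal_kronecker_diagonal]
      exact numRadius_diagonal_le_one fun p => by
        rw [norm_mul]; exact mul_le_one₀ (hα p.1) (norm_nonneg _) (hβ p.2))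
    (fun i j => by
      rw [hT, hφ, diagonal_kronecker_diagonal]
      simpa using norm_le_numRadius_diagonal
        (fun p => (Pi.single i 1 : Fin m → ℂ) p.1 * (Pi.single j 1 : Fin n → ℂ) p.2) (i, j))
  refine ⟨u, ξ, hu, hξ, fun i j => ?_⟩
  rw [← diagonal_single, ← diagonal_single, ← hT, hTsingle]
end
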